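/- arXiv:2602.06250 — 2 statements merged into one kernel-verified Lean document; each statement's English description precedes it below -/
import Mathlib

section
/- Let D ⊂ R^d be a bounded Lipschitz domain, n ∈ L^∞(D) with n_* := ess-inf_D n > 1, and set γ := 1/(n^* − 1) with n^* := ess-sup_D n. If 0 < τ < λ₁(D)/n^*, then for every u ∈ H^2_0(D) with u ≠ 0, ∫_D (1/(n−1)) |Δu + τu|² dx + τ² ∫_D |u|² dx − τ ∫_D |∇u|² dx > 0. Consequently, no k > 0 with k² < λ₁(D)/n^* is a transmission eigenvalue. -/
/-!
For `n > 1` one has pointwise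
`(Δu + τu)² / (n - 1) = (Δu + τnu)² / (n - 1) - 2τ u Δu - τ²(n + 1) u²`.
Dropping the nonnegative first term, bounding `n ≤ n^*` and integrating by parts
(`∫ u Δu = -∫ |∇u|²`), the form is at least `τ ∫ |∇u|² - τ² n^* ∫ u²`, which the Poincaré
inequality bounds below by `τ (λ₁ - τ n^*) ∫ u² > 0`. A transmission eigenvalue `k` would make
the form vanish at `τ = k²`.
-/

open MeasureTheory

/-- The Laplacian of a function on `ℝ^d`, written via iterated directional derivatives. -/
noncomputable def lap (d : ℕ) (u : (Fin d → ℝ) → ℝ) (x : Fin d → ℝ) : ℝ :=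
  ∑ i, fderiv ℝ (fun y => fderiv ℝ u y (Pi.single i 1)) x (Pi.single i 1)

open Function

theorem HasCompactSupport.sq {X : Type*} [TopologicalSpace X] {f : X → ℝ}
    (hf : HasCompactSupport f) : HasCompactSupport (fun x => f x ^ 2) :=
  hf.comp_left (g := fun t => t ^ 2) (zero_pow two_ne_zero)

section IntegrationByParts

variable {E : Type*} [NormedAddCommGroup E] [NormedSpace ℝ E] {f : E → ℝ}

theorem ContDiff.fderiv_apply_right (hf : ContDiff ℝ (⊤ : ℕ∞) f) (v : E) :
    ContDiff ℝ (⊤ : ℕ∞) (fderiv ℝ f · v) :=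
  (hf.fderiv_right (by simp)).clm_apply contDiff_const

theorem integral_mul_fderiv_fderiv_apply_eq_neg [FiniteDimensional ℝ E] [MeasurableSpace E]
    [BorelSpace E] {μ : Measure E} [μ.IsAddHaarMeasure] (hf : ContDiff ℝ (⊤ : ℕ∞) f)
    (hc : HasCompactSupport f) (v : E) :
    ∫ x, f x * fderiv ℝ (fderiv ℝ f · v) x v ∂μ = -∫ x, (fderiv ℝ f x v) ^ 2 ∂μ := by
  have hf' := hf.fderiv_apply_right v
  have hc' := hc.fderiv_apply (𝕜 := ℝ) v
  simp_rw [sq]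
  exact integral_mul_fderiv_eq_neg_fderiv_mul_of_integrable
    ((hf'.continuous.mul hf'.continuous).integrable_of_hasCompactSupport hc'.mul_right)
    ((hf.continuous.mul (hf'.fderiv_apply_right v).continuous)
      |>.integrable_of_hasCompactSupport hc.mul_right)
    ((hf.continuous.mul hf'.continuous).integrable_of_hasCompactSupport hc.mul_right)
    (fun x _ => hf.differentiable (by simp) x) (fun x _ => hf'.differentiable (by simp) x)

end IntegrationByParts

section Laplacian

variable {d : ℕ} {u : (Fin d → ℝ) → ℝ}

theorem lap_of_notMem_tsupport {x : Fin d → ℝ} (hx : x ∉ tsupport u) : lap d u x = 0 :=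
  Finset.sum_eq_zero fun i _ => by
    rw [fderiv_of_notMem_tsupport ℝ (mt (tsupport_fderiv_apply_subset ℝ _ ·) hx)]
    rfl

theorem continuous_lap (hu : ContDiff ℝ (⊤ : ℕ∞) u) : Continuous (lap d u) :=
  continuous_finsetSum _ fun _ _ =>
    ((hu.fderiv_apply_right _).fderiv_apply_right _).continuous

theorem HasCompactSupport.lap (hc : HasCompactSupport u) : HasCompactSupport (lap d u) :=
  hc.mono' fun _ hx => by_contra fun h => hx (lap_of_notMem_tsupport h)

theorem integral_mul_lap (hu : ContDiff ℝ (⊤ : ℕ∞) u) (hc : HasCompactSupport u) :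
    ∫ x, u x * lap d u x = -∫ x, ∑ i, (fderiv ℝ u x (Pi.single i 1)) ^ 2 := by
  simp only [lap, Finset.mul_sum]
  rw [integral_finsetSum _ fun _ _ => ?_, integral_finsetSum _ fun _ _ => ?_,
    ← Finset.sum_neg_distrib]
  · exact Finset.sum_congr rfl fun i _ => integral_mul_fderiv_fderiv_apply_eq_neg hu hc _
  · exact ((hu.fderiv_apply_right _).continuous.pow 2).integrable_of_hasCompactSupport
      (hc.fderiv_apply (𝕜 := ℝ) _).sq
  · exact (hu.continuous.mul ((hu.fderiv_apply_right _).fderiv_apply_right _).continuous)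
      |>.integrable_of_hasCompactSupport hc.mul_right

end Laplacian

theorem neg_two_mul_sub_le_one_div_mul_sq {a b τ m N : ℝ} (hm : 1 < m) (hmN : m ≤ N) :
    -2 * τ * (b * a) - τ ^ 2 * (N + 1) * b ^ 2 ≤ 1 / (m - 1) * (a + τ * b) ^ 2 := by
  have hm' : 0 < m - 1 := sub_pos.2 hm
  have key : 1 / (m - 1) * (a + τ * b) ^ 2
      = 1 / (m - 1) * (a + τ * m * b) ^ 2 - 2 * τ * (b * a) - τ ^ 2 * (m + 1) * b ^ 2 := by
    field_simp
    ring
  rw [key]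
  have : 0 ≤ 1 / (m - 1) * (a + τ * m * b) ^ 2 := by positivity
  nlinarith [mul_nonneg (mul_nonneg (sq_nonneg τ) (sub_nonneg.2 hmN)) (sq_nonneg b)]

theorem MeasureTheory.Integrable.mul_of_abs_le_on_support {α : Type*} [MeasurableSpace α]
    {μ : Measure α} {w g : α → ℝ} {C : ℝ} (hg : Integrable g μ) (hw : AEStronglyMeasurable w μ)
    (hC : ∀ x, g x ≠ 0 → |w x| ≤ C) : Integrable (fun x => w x * g x) μ := by
  refine (hg.norm.const_mul C).mono' (hw.mul hg.1) (.of_forall fun x => ?_)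
  rw [norm_mul, Real.norm_eq_abs]
  by_cases hx : g x = 0
  · simp [hx]
  · exact mul_le_mul_of_nonneg_right (hC x hx) (norm_nonneg _)

noncomputable def transmissionForm (d : ℕ) (D : Set (Fin d → ℝ)) (n u : (Fin d → ℝ) → ℝ)
    (τ : ℝ) : ℝ :=
  (∫ x in D, 1 / (n x - 1) * (lap d u x + τ * u x) ^ 2) + τ ^ 2 * (∫ x in D, u x ^ 2)
    - τ * ∫ x in D, ∑ i, (fderiv ℝ u x (Pi.single i 1)) ^ 2

section TransmissionForm

variable {d : ℕ} {u n : (Fin d → ℝ) → ℝ} {nstar Nstar : ℝ}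

theorem integrable_one_div_mul_lap_add_sq (hu : ContDiff ℝ (⊤ : ℕ∞) u)
    (hc : HasCompactSupport u) (hn : Measurable n) (hnstar : 1 < nstar)
    (hbounds : ∀ x ∈ tsupport u, nstar ≤ n x) (τ : ℝ) :
    Integrable (fun x => 1 / (n x - 1) * (lap d u x + τ * u x) ^ 2) := by
  refine Integrable.mul_of_abs_le_on_support (C := 1 / (nstar - 1)) ?_
    ((hn.sub_const 1).const_div 1).aestronglyMeasurable fun x hx => ?_
  · exact (((continuous_lap hu).add (hu.continuous.const_mul τ)).pow 2)
      |>.integrable_of_hasCompactSupport (hc.lap.add hc.mul_left).sq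
  · have hxu : x ∈ tsupport u := by
      by_contra h
      simp [lap_of_notMem_tsupport h, image_eq_zero_of_notMem_tsupport h] at hx
    have := hbounds x hxu
    rw [abs_of_pos (one_div_pos.2 (by linarith))]
    gcongr

theorem le_integral_one_div_mul_lap_add_sq (hu : ContDiff ℝ (⊤ : ℕ∞) u)
    (hc : HasCompactSupport u) (hn : Measurable n) (hnstar : 1 < nstar)
    (hbounds : ∀ x ∈ tsupport u, nstar ≤ n x ∧ n x ≤ Nstar) (τ : ℝ) :
    2 * τ * (∫ x, ∑ i, (fderiv ℝ u x (Pi.single i 1)) ^ 2) - τ ^ 2 * (Nstar + 1) * ∫ x, u x ^ 2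
      ≤ ∫ x, 1 / (n x - 1) * (lap d u x + τ * u x) ^ 2 := by
  have hint_ulap : Integrable (fun x => u x * lap d u x) :=
    (hu.continuous.mul (continuous_lap hu)).integrable_of_hasCompactSupport hc.mul_right
  have hint_u2 : Integrable (fun x => u x ^ 2) :=
    (hu.continuous.pow 2).integrable_of_hasCompactSupport hc.sq
  calc _ = ∫ x, (-2 * τ * (u x * lap d u x) - τ ^ 2 * (Nstar + 1) * u x ^ 2) := by
        rw [integral_sub (hint_ulap.const_mul _) (hint_u2.const_mul _), integral_const_mul,
          integral_const_mul, integral_mul_lap hu hc]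
        ring
    _ ≤ _ := by
      refine integral_mono ((hint_ulap.const_mul _).sub (hint_u2.const_mul _))
        (integrable_one_div_mul_lap_add_sq hu hc hn hnstar (fun x hx => (hbounds x hx).1) τ)
        fun x => ?_
      by_cases hx : x ∈ tsupport u
      · exact neg_two_mul_sub_le_one_div_mul_sq (hnstar.trans_le (hbounds x hx).1)
          (hbounds x hx).2
      · simp [lap_of_notMem_tsupport hx, image_eq_zero_of_notMem_tsupport hx]

theorem transmissionForm_pos {D : Set (Fin d → ℝ)} {lam1 τ : ℝ} (hu : ContDiff ℝ (⊤ : ℕ∞) u)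
    (hc : HasCompactSupport u) (hD : tsupport u ⊆ D) (hu0 : u ≠ 0) (hn : Measurable n)
    (hnstar : 1 < nstar) (hbounds : ∀ x ∈ D, nstar ≤ n x ∧ n x ≤ Nstar)
    (hpoincare : lam1 * ∫ x in D, u x ^ 2 ≤ ∫ x in D, ∑ i, (fderiv ℝ u x (Pi.single i 1)) ^ 2)
    (hτ : 0 < τ) (hτlt : τ < lam1 / Nstar) :
    0 < transmissionForm d D n u τ := by
  obtain ⟨x₀, hx₀⟩ := ne_iff.mp hu0
  have hNstar : 0 < Nstar := by linarith [hbounds x₀ (hD (subset_tsupport u hx₀))]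
  have hB : 0 < ∫ x, u x ^ 2 :=
    (hu.continuous.pow 2).integral_pos_of_hasCompactSupport_nonneg_nonzero hc.sq
      (fun x => sq_nonneg (u x)) (pow_ne_zero 2 hx₀)
  have hlower := le_integral_one_div_mul_lap_add_sq hu hc hn hnstar
    (fun x hx => hbounds x (hD hx)) τ
  have hD_integral {f : (Fin d → ℝ) → ℝ} (hf : ∀ x ∉ tsupport u, f x = 0) :
      ∫ x in D, f x = ∫ x, f x :=
    setIntegral_eq_integral_of_forall_compl_eq_zero fun x hx => hf x (mt (hD ·) hx)
  rw [hD_integral, hD_integral] at hpoincare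
  rw [transmissionForm, hD_integral, hD_integral, hD_integral]
  · nlinarith [mul_le_mul_of_nonneg_left hpoincare hτ.le,
      mul_pos (mul_pos hτ hB) (sub_pos.2 ((lt_div_iff₀ hNstar).1 hτlt))]
  all_goals
    intro x hx
    simp [image_eq_zero_of_notMem_tsupport hx, lap_of_notMem_tsupport hx,
      fderiv_of_notMem_tsupport ℝ hx]

end TransmissionForm

theorem stmt_2_general (d : ℕ) (D : Set (Fin d → ℝ))
    (n : (Fin d → ℝ) → ℝ) (hnmeas : Measurable n)
    (nstar Nstar : ℝ) (hnstar : 1 < nstar)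
    (hbounds : ∀ x ∈ D, nstar ≤ n x ∧ n x ≤ Nstar)
    (lam1 : ℝ)
    (hlam1 : ∀ v : (Fin d → ℝ) → ℝ, ContDiff ℝ (⊤ : ℕ∞) v → HasCompactSupport v →
      tsupport v ⊆ D →
      lam1 * ∫ x in D, (v x) ^ 2 ≤ ∫ x in D, ∑ i, (fderiv ℝ v x (Pi.single i 1)) ^ 2) :
    (∀ τ : ℝ, 0 < τ → τ < lam1 / Nstar →
      ∀ u : (Fin d → ℝ) → ℝ, ContDiff ℝ (⊤ : ℕ∞) u → HasCompactSupport u →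
        tsupport u ⊆ D → u ≠ 0 →
        0 < (∫ x in D, (1 / (n x - 1)) * (lap d u x + τ * u x) ^ 2)
              + τ ^ 2 * (∫ x in D, (u x) ^ 2)
              - τ * ∫ x in D, ∑ i, (fderiv ℝ u x (Pi.single i 1)) ^ 2) ∧
    (∀ k : ℝ, 0 < k → k ^ 2 < lam1 / Nstar →
      ¬ ∃ u : (Fin d → ℝ) → ℝ, ContDiff ℝ (⊤ : ℕ∞) u ∧ HasCompactSupport u ∧
          tsupport u ⊆ D ∧ u ≠ 0 ∧
          (∫ x in D, (1 / (n x - 1)) * (lap d u x + k ^ 2 * u x) ^ 2)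
              + (k ^ 2) ^ 2 * (∫ x in D, (u x) ^ 2)
              - k ^ 2 * ∫ x in D, ∑ i, (fderiv ℝ u x (Pi.single i 1)) ^ 2 = 0) := by
  refine ⟨fun τ hτ hτlt u hu hc hD hu0 => ?_, fun k hk hk2 ⟨u, hu, hc, hD, hu0, h⟩ => ?_⟩
  · exact transmissionForm_pos hu hc hD hu0 hnmeas hnstar hbounds (hlam1 u hu hc hD) hτ hτlt
  · exact (transmissionForm_pos hu hc hD hu0 hnmeas hnstar hbounds (hlam1 u hu hc hD)
      (by positivity) hk2).ne' h

/-- Let `D` be a bounded (Lipschitz) domain, `n ∈ L^∞(D)` with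
`n_* = ess-inf n > 1`, `n^* = ess-sup n`.  If `0 < τ < λ₁(D)/n^*` then for every nonzero
`u ∈ H^2_0(D)` (encoded by smooth functions with compact support in `D`),
`∫ (1/(n−1))|Δu + τu|² + τ²∫|u|² − τ∫|∇u|² > 0`.  Consequently no `k > 0` with
`k² < λ₁(D)/n^*` is a transmission eigenvalue. -/
theorem stmt_2 (d : ℕ) (D : Set (Fin d → ℝ)) (hD : IsOpen D)
    (hDbounded : Bornology.IsBounded D)
    (n : (Fin d → ℝ) → ℝ) (hnmeas : Measurable n)
    (nstar Nstar : ℝ) (hnstar : 1 < nstar)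
    (hbounds : ∀ x ∈ D, nstar ≤ n x ∧ n x ≤ Nstar)
    (lam1 : ℝ) (hlam1pos : 0 < lam1)
    (hlam1 : ∀ v : (Fin d → ℝ) → ℝ, ContDiff ℝ (⊤ : ℕ∞) v → HasCompactSupport v →
      tsupport v ⊆ D →
      lam1 * ∫ x in D, (v x) ^ 2 ≤ ∫ x in D, ∑ i, (fderiv ℝ v x (Pi.single i 1)) ^ 2) :
    (∀ τ : ℝ, 0 < τ → τ < lam1 / Nstar →
      ∀ u : (Fin d → ℝ) → ℝ, ContDiff ℝ (⊤ : ℕ∞) u → HasCompactSupport u →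
        tsupport u ⊆ D → u ≠ 0 →
        0 < (∫ x in D, (1 / (n x - 1)) * (lap d u x + τ * u x) ^ 2)
              + τ ^ 2 * (∫ x in D, (u x) ^ 2)
              - τ * ∫ x in D, ∑ i, (fderiv ℝ u x (Pi.single i 1)) ^ 2) ∧
    (∀ k : ℝ, 0 < k → k ^ 2 < lam1 / Nstar →
      ¬ ∃ u : (Fin d → ℝ) → ℝ, ContDiff ℝ (⊤ : ℕ∞) u ∧ HasCompactSupport u ∧
          tsupport u ⊆ D ∧ u ≠ 0 ∧
          (∫ x in D, (1 / (n x - 1)) * (lap d u x + k ^ 2 * u x) ^ 2)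
              + (k ^ 2) ^ 2 * (∫ x in D, (u x) ^ 2)
              - k ^ 2 * ∫ x in D, ∑ i, (fderiv ℝ u x (Pi.single i 1)) ^ 2 = 0) :=
  stmt_2_general d D n hnmeas nstar Nstar hnstar hbounds lam1 hlam1
end

section
/- Let D = (0,1)² ⊂ R², a ≠ 1 a positive constant, A_D = aI, n_D = a. For integers k₁, k₂, let u_in(x₁,x₂) = cos(k₁πx₁)cos(k₂πx₂) and k = π√(k₁² + k₂²). Then u = 0 solves ∇·(A∇u) + k²nu = ∇·((I−A)∇u_in) + k²(1−n)u_in in R², where A = aI and n = a on D, and A = I, n = 1 outside D; i.e., ∇·((I−A)∇u_in) + k²(1−n)u_in = 0 as a distribution on R². -/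
/-! Because `u_in` solves `Δu + k²u = 0` in `ℝ²`, the integrand equals
`-(1 - a)(∇u_in·∇φ + Δu_in φ)`, whose integral over the square is the flux `∫_{∂D} φ ∂_ν u_in`
of `φ∇u_in` (divergence theorem).
On each side of the square `∂_ν u_in` is a multiple of `sin 0` or `sin (kᵢπ)`, hence zero. -/

open MeasureTheory

/-- The open unit square `(0,1)² ⊂ ℝ²`. -/
def unitSq : Set (Fin 2 → ℝ) :=
  {x | x 0 ∈ Set.Ioo (0 : ℝ) 1 ∧ x 1 ∈ Set.Ioo (0 : ℝ) 1}

/-- The incident wave `u_in(x₁,x₂) = cos(k₁πx₁)cos(k₂πx₂)`. -/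
noncomputable def uinCos (k1 k2 : ℤ) (x : Fin 2 → ℝ) : ℝ :=
  Real.cos (k1 * Real.pi * x 0) * Real.cos (k2 * Real.pi * x 1)

open Set

theorem integral_Icc_sum_fderiv_mul_add_laplacian_mul_eq_zero {n : ℕ}
    {a b : Fin (n + 1) → ℝ} (hle : a ≤ b) {u φ : (Fin (n + 1) → ℝ) → ℝ}
    (hu : ContDiff ℝ 2 u) (hφ : ContDiff ℝ 1 φ)
    (hneumann : ∀ i, ∀ x ∈ Icc a b, (x i = a i ∨ x i = b i) →
      fderiv ℝ u x (Pi.single i 1) = 0) :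
    ∫ x in Icc a b, ∑ i, (fderiv ℝ u x (Pi.single i 1) * fderiv ℝ φ x (Pi.single i 1) +
      fderiv ℝ (fun y => fderiv ℝ u y (Pi.single i 1)) x (Pi.single i 1) * φ x) = 0 := by
  set g : Fin (n + 1) → (Fin (n + 1) → ℝ) → ℝ := fun i y => fderiv ℝ u y (Pi.single i 1)
  have hg : ∀ i, ContDiff ℝ 1 (g i) := fun i =>
    (hu.fderiv_right (by norm_num)).clm_apply contDiff_const
  have hdiv := integral_divergence_of_hasFDerivAt_off_countable' a b hle
    (fun i y => φ y * g i y) (fun i y => φ y • fderiv ℝ (g i) y + g i y • fderiv ℝ φ y)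
    ∅ countable_empty
    (fun i => (hφ.continuous.mul (hg i).continuous).continuousOn)
    (fun x _ i => (hφ.differentiable one_ne_zero x).hasFDerivAt.mul
      ((hg i).differentiable one_ne_zero x).hasFDerivAt)
    (by
      refine Continuous.integrableOn_Icc (continuous_finsetSum _ fun i _ => ?_)
      simp only [add_apply, smul_apply, smul_eq_mul]
      have := (hg i).continuous_fderiv one_ne_zero
      have := hφ.continuous_fderiv one_ne_zero
      fun_prop)
  have hface : ∀ i c, (c = a i ∨ c = b i) →
      ∀ y ∈ Icc (a ∘ Fin.succAbove i) (b ∘ Fin.succAbove i),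
        φ (Fin.insertNth i c y) * g i (Fin.insertNth i c y) = 0 := by
    intro i c hc y hy
    have hmem : Fin.insertNth i c y ∈ Icc a b :=
      Fin.insertNth_mem_Icc.2 ⟨by rcases hc with rfl | rfl <;> simp [hle i], hy⟩
    simp only [g, hneumann i _ hmem (by simpa using hc), mul_zero]
  simp only [add_apply, smul_apply, smul_eq_mul] at hdiv
  calc _ = ∫ x in Icc a b, ∑ i, (φ x * fderiv ℝ (g i) x (Pi.single i 1) +
        g i x * fderiv ℝ φ x (Pi.single i 1)) := by
        congr! 3 with x i; ring
    _ = 0 := by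
        rw [hdiv]
        refine Finset.sum_eq_zero fun i _ => ?_
        rw [setIntegral_congr_fun measurableSet_Icc (hface i _ (.inr rfl)),
          setIntegral_congr_fun measurableSet_Icc (hface i _ (.inl rfl)), sub_self]

section Separable

variable {f g : ℝ → ℝ} {x : Fin 2 → ℝ}

theorem fderiv_mul_comp_apply_single_zero (hf : DifferentiableAt ℝ f (x 0))
    (hg : DifferentiableAt ℝ g (x 1)) :
    fderiv ℝ (fun y : Fin 2 → ℝ => f (y 0) * g (y 1)) x (Pi.single 0 1) =
      deriv f (x 0) * g (x 1) := by
  have h : HasFDerivAt (fun y : Fin 2 → ℝ => f (y 0) * g (y 1)) _ x :=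
    (hf.hasDerivAt.comp_hasFDerivAt x (hasFDerivAt_apply (𝕜 := ℝ) 0 x)).mul
      (hg.hasDerivAt.comp_hasFDerivAt x (hasFDerivAt_apply (𝕜 := ℝ) 1 x))
  simp [h.fderiv, mul_comm]

theorem fderiv_mul_comp_apply_single_one (hf : DifferentiableAt ℝ f (x 0))
    (hg : DifferentiableAt ℝ g (x 1)) :
    fderiv ℝ (fun y : Fin 2 → ℝ => f (y 0) * g (y 1)) x (Pi.single 1 1) =
      f (x 0) * deriv g (x 1) := by
  have h : HasFDerivAt (fun y : Fin 2 → ℝ => f (y 0) * g (y 1)) _ x :=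
    (hf.hasDerivAt.comp_hasFDerivAt x (hasFDerivAt_apply (𝕜 := ℝ) 0 x)).mul
      (hg.hasDerivAt.comp_hasFDerivAt x (hasFDerivAt_apply (𝕜 := ℝ) 1 x))
  simp [h.fderiv]

theorem sum_fderiv_fderiv_mul_comp_apply_single (hf : ContDiff ℝ 2 f) (hg : ContDiff ℝ 2 g) :
    ∑ i, fderiv ℝ (fun y => fderiv ℝ (fun z : Fin 2 → ℝ => f (z 0) * g (z 1)) y
      (Pi.single i 1)) x (Pi.single i 1) =
      iteratedDeriv 2 f (x 0) * g (x 1) + f (x 0) * iteratedDeriv 2 g (x 1) := by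
  have hf₁ := hf.differentiable two_ne_zero
  have hg₁ := hg.differentiable two_ne_zero
  have hf'₁ := (ContDiff.deriv' (n := 1) hf).differentiable one_ne_zero
  have hg'₁ := (ContDiff.deriv' (n := 1) hg).differentiable one_ne_zero
  have h₀ : (fun y => fderiv ℝ (fun z : Fin 2 → ℝ => f (z 0) * g (z 1)) y (Pi.single 0 1)) =
      fun y => deriv f (y 0) * g (y 1) :=
    funext fun y => fderiv_mul_comp_apply_single_zero (hf₁ _) (hg₁ _)
  have h₁ : (fun y => fderiv ℝ (fun z : Fin 2 → ℝ => f (z 0) * g (z 1)) y (Pi.single 1 1)) =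
      fun y => f (y 0) * deriv g (y 1) :=
    funext fun y => fderiv_mul_comp_apply_single_one (hf₁ _) (hg₁ _)
  rw [Fin.sum_univ_two, h₀, h₁, fderiv_mul_comp_apply_single_zero (hf'₁ _) (hg₁ _),
    fderiv_mul_comp_apply_single_one (hf₁ _) (hg'₁ _), iteratedDeriv_succ, iteratedDeriv_one,
    iteratedDeriv_succ, iteratedDeriv_one]

end Separable

theorem iteratedDeriv_two_cos_const_mul (c : ℝ) :
    iteratedDeriv 2 (fun t => Real.cos (c * t)) = fun t => -c ^ 2 * Real.cos (c * t) := by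
  rw [iteratedDeriv_comp_const_mul Real.contDiff_cos]
  funext t
  simp [congrFun (Real.iteratedDeriv_even_cos 1) (c * t)]

theorem deriv_cos_const_mul (c t : ℝ) :
    deriv (fun t => Real.cos (c * t)) t = -(c * Real.sin (c * t)) := by
  have h : HasDerivAt (fun t => Real.cos (c * t)) _ t := ((hasDerivAt_id t).const_mul c).cos
  simp [h.deriv, mul_comm]

theorem sum_fderiv_fderiv_uinCos (k1 k2 : ℤ) (x : Fin 2 → ℝ) :
    ∑ i, fderiv ℝ (fun y => fderiv ℝ (uinCos k1 k2) y (Pi.single i 1)) x (Pi.single i 1) =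
      -(Real.pi ^ 2 * ((k1 : ℝ) ^ 2 + (k2 : ℝ) ^ 2)) * uinCos k1 k2 x := by
  unfold uinCos
  rw [sum_fderiv_fderiv_mul_comp_apply_single (f := fun t => Real.cos (k1 * Real.pi * t))
    (g := fun t => Real.cos (k2 * Real.pi * t)) (by fun_prop) (by fun_prop),
    iteratedDeriv_two_cos_const_mul, iteratedDeriv_two_cos_const_mul]
  ring

theorem fderiv_uinCos_apply_single_eq_zero (k1 k2 : ℤ) {x : Fin 2 → ℝ} (i : Fin 2)
    (hx : x i = 0 ∨ x i = 1) : fderiv ℝ (uinCos k1 k2) x (Pi.single i 1) = 0 := by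
  unfold uinCos
  fin_cases i <;> simp only [Fin.zero_eta, Fin.mk_one, Fin.isValue] at hx ⊢
  · rw [fderiv_mul_comp_apply_single_zero (f := fun t => Real.cos (k1 * Real.pi * t))
      (g := fun t => Real.cos (k2 * Real.pi * t)) (by fun_prop) (by fun_prop), deriv_cos_const_mul]
    rcases hx with hx | hx <;> simp_all [Real.sin_int_mul_pi]
  · rw [fderiv_mul_comp_apply_single_one (f := fun t => Real.cos (k1 * Real.pi * t))
      (g := fun t => Real.cos (k2 * Real.pi * t)) (by fun_prop) (by fun_prop), deriv_cos_const_mul]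
    rcases hx with hx | hx <;> simp_all [Real.sin_int_mul_pi]

theorem unitSq_ae_eq_Icc : unitSq =ᵐ[volume] Icc (0 : Fin 2 → ℝ) 1 := by
  have h : unitSq = Set.pi univ fun _ : Fin 2 => Ioo (0 : ℝ) 1 := by
    ext x
    simp [unitSq, Set.mem_pi, Fin.forall_fin_two]
  rw [h, volume_pi]
  exact Measure.univ_pi_Ioo_ae_eq_Icc

theorem stmt_5_general (a : ℝ) (k1 k2 : ℤ) (k : ℝ)
    (hk : k = Real.pi * Real.sqrt ((k1 : ℝ) ^ 2 + (k2 : ℝ) ^ 2)) :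
    ∀ φ : (Fin 2 → ℝ) → ℝ, ContDiff ℝ (⊤ : ℕ∞) φ → HasCompactSupport φ →
      ∫ x in unitSq,
        (1 - a) *
          (-(∑ i, fderiv ℝ (uinCos k1 k2) x (Pi.single i 1) * fderiv ℝ φ x (Pi.single i 1))
            + k ^ 2 * uinCos k1 k2 x * φ x) = 0 := by
  intro φ hφ _
  have hk2 : k ^ 2 = Real.pi ^ 2 * ((k1 : ℝ) ^ 2 + (k2 : ℝ) ^ 2) := by
    rw [hk, mul_pow, Real.sq_sqrt (by positivity)]
  have green := integral_Icc_sum_fderiv_mul_add_laplacian_mul_eq_zero zero_le_one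
    (by unfold uinCos; fun_prop) (hφ.of_le (by exact_mod_cast le_top))
    fun i x _ hx => fderiv_uinCos_apply_single_eq_zero k1 k2 i (by simpa using hx)
  rw [setIntegral_congr_set unitSq_ae_eq_Icc, ← mul_zero (-(1 - a)), ← green,
    ← integral_const_mul]
  congr! 2 with x
  rw [Finset.sum_add_distrib, ← Finset.sum_mul, sum_fderiv_fderiv_uinCos, hk2]
  ring

/-- Let `D = (0,1)²`, `A_D = aI`, `n_D = a` with `a > 0`, `a ≠ 1`. For
integers `k₁, k₂`, `u_in = cos(k₁πx₁)cos(k₂πx₂)` and `k = π√(k₁²+k₂²)`, `u = 0` solves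
the non-scattering equation, i.e. `∇·((I−A)∇u_in) + k²(1−n)u_in = 0` as a distribution
on `ℝ²`: for every test function `φ`,
`∫_D (1−a)(−∇u_in·∇φ + k² u_in φ) dx = 0`. -/
theorem stmt_5 (a : ℝ) (ha : 0 < a) (hne : a ≠ 1) (k1 k2 : ℤ) (k : ℝ)
    (hk : k = Real.pi * Real.sqrt ((k1 : ℝ) ^ 2 + (k2 : ℝ) ^ 2)) :
    ∀ φ : (Fin 2 → ℝ) → ℝ, ContDiff ℝ (⊤ : ℕ∞) φ → HasCompactSupport φ →
      ∫ x in unitSq,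
        (1 - a) *
          (-(∑ i, fderiv ℝ (uinCos k1 k2) x (Pi.single i 1) * fderiv ℝ φ x (Pi.single i 1))
            + k ^ 2 * uinCos k1 k2 x * φ x) = 0 :=
  stmt_5_general a k1 k2 k hk
end
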